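/- arXiv:2605.09183 — 2 statements merged into one kernel-verified Lean document; each statement's English description precedes it below -/
import Mathlib

section
/- Let M, n be positive integers, T ⊆ [M]^n a finite nonempty set of vectors, and ε ∈ (0,1). Set K = ⌈1/ε⌉. Then there exists a probability distribution q over subsets S ⊆ T of size at most K such that for every τ ∈ T, E_{S∼q}[ (1/n) Σ_{i=1}^n 1[min_{v∈S} v_i > τ_i] ] < ε. -/
/-!
By von Neumann's minimax theorem it suffices, against every mixed strategy `p` of the adversary
choosing `τ ∈ T`, to find a single subset `S` that does well on average. Take `S` to be `K`
independent samples from `p` itself: in each coordinate, a fresh `τ ∼ p` is strictly below all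
`K` samples with probability at most `1 / (K + 1)` by exchangeability, so some realisation of `S`
has expected loss at most `1 / (K + 1) < ε`.
-/

open Finset Matrix

theorem Matrix.exists_mem_stdSimplex_forall_mulVec_le {ι κ : Type*} [Fintype ι] [Fintype κ]
    [Nonempty ι] (G : Matrix ι κ ℝ) (c : ℝ)
    (h : ∀ p ∈ stdSimplex ℝ ι, ∃ s, (p ᵥ* G) s ≤ c) :
    ∃ q ∈ stdSimplex ℝ κ, ∀ i, (G *ᵥ q) i ≤ c := by
  classical
  obtain ⟨s₀, -⟩ := h _ (single_mem_stdSimplex ℝ (Classical.arbitrary ι))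
  have hconvex (p : ι → ℝ) : ConvexOn ℝ (stdSimplex ℝ κ) fun q => p ⬝ᵥ (G *ᵥ q) :=
    ((toLinearMap₂' ℝ G p).convexOn (convex_stdSimplex ℝ κ)).congr
      fun q _ => toLinearMap₂'_apply' G p q
  have hconcave (q : κ → ℝ) : ConcaveOn ℝ (stdSimplex ℝ ι) fun p => p ⬝ᵥ (G *ᵥ q) :=
    (((toLinearMap₂' ℝ G).flip q).concaveOn (convex_stdSimplex ℝ ι)).congr
      fun p _ => toLinearMap₂'_apply' G p q
  obtain ⟨q, hq, p, hp, hsaddle⟩ := Sion.exists_isSaddlePointOn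
    (f := fun q p => p ⬝ᵥ (G *ᵥ q))
    ⟨_, single_mem_stdSimplex ℝ s₀⟩ (convex_stdSimplex ℝ κ) (isCompact_stdSimplex ℝ κ)
    (fun _ _ => (by fun_prop : Continuous _).lowerSemicontinuous.lowerSemicontinuousOn _)
    (fun p _ => (hconvex p).quasiconvexOn)
    (convex_stdSimplex ℝ ι) ⟨_, single_mem_stdSimplex ℝ (Classical.arbitrary ι)⟩
    (isCompact_stdSimplex ℝ ι)
    (fun _ _ => (by fun_prop : Continuous _).upperSemicontinuous.upperSemicontinuousOn _)
    (fun q _ => (hconcave q).quasiconcaveOn)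
  obtain ⟨s, hs⟩ := h p hp
  refine ⟨q, hq, fun i => ?_⟩
  calc (G *ᵥ q) i = Pi.single i 1 ⬝ᵥ (G *ᵥ q) := (single_one_dotProduct _ _).symm
    _ ≤ p ⬝ᵥ (G *ᵥ Pi.single s 1) :=
      hsaddle _ (single_mem_stdSimplex ℝ s) _ (single_mem_stdSimplex ℝ i)
    _ = (p ᵥ* G) s := by rw [dotProduct_mulVec, dotProduct_single_one]
    _ ≤ c := hs

section Exchangeability

variable {α ι β : Type*} [Fintype α] [DecidableEq α] [Fintype ι] [LinearOrder β]

lemma sum_ite_forall_ne_lt_le_one (f : α → β) :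
    ∑ m, (if ∀ k ≠ m, f m < f k then (1 : ℝ) else 0) ≤ 1 := by
  rw [sum_boole, Nat.cast_le_one]
  refine card_le_one.mpr fun a ha b hb => by_contra fun hab => ?_
  exact lt_asymm ((mem_filter.mp ha).2 b (Ne.symm hab)) ((mem_filter.mp hb).2 a hab)

lemma sum_prod_eq_one {p : ι → ℝ} (hp : ∑ i, p i = 1) : ∑ w : α → ι, ∏ k, p (w k) = 1 := by
  rw [← Fintype.prod_sum (fun _ : α => p), hp, prod_const_one]

lemma sum_prod_mul_ite_forall_ne_lt_eq (p : ι → ℝ) (h : ι → β) (a b : α) :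
    ∑ w : α → ι, (∏ k, p (w k)) * (if ∀ k ≠ a, h (w a) < h (w k) then 1 else 0) =
      ∑ w : α → ι, (∏ k, p (w k)) * (if ∀ k ≠ b, h (w b) < h (w k) then 1 else 0) := by
  refine Fintype.sum_equiv (Equiv.arrowCongr (Equiv.swap a b) (Equiv.refl ι)) _ _ fun w => ?_
  simp only [Equiv.arrowCongr_apply, Equiv.symm_swap, Equiv.coe_refl, Function.comp_apply, id]
  rw [Equiv.swap_apply_right, ← Equiv.prod_comp (Equiv.swap a b) fun k => p (w k)]
  congr 2
  rw [(Equiv.swap a b).forall_congr_left]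
  simp [Equiv.swap_apply_eq_iff]

/-- At most one of the draws `w m` is the strict minimum, and by symmetry each is so with the
same probability. -/
lemma card_mul_sum_prod_mul_ite_forall_ne_lt_le_one {p : ι → ℝ} (hp : p ∈ stdSimplex ℝ ι)
    (h : ι → β) (a : α) :
    Fintype.card α *
      ∑ w : α → ι, (∏ k, p (w k)) * (if ∀ k ≠ a, h (w a) < h (w k) then 1 else 0) ≤ 1 := by
  calc (Fintype.card α : ℝ) *
        ∑ w : α → ι, (∏ k, p (w k)) * (if ∀ k ≠ a, h (w a) < h (w k) then 1 else 0)
      = ∑ m, ∑ w : α → ι, (∏ k, p (w k)) * (if ∀ k ≠ m, h (w m) < h (w k) then 1 else 0) := by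
        rw [← nsmul_eq_mul, ← card_univ, ← sum_const]
        exact sum_congr rfl fun m _ => sum_prod_mul_ite_forall_ne_lt_eq p h a m
    _ = ∑ w : α → ι, (∏ k, p (w k)) * ∑ m, (if ∀ k ≠ m, h (w m) < h (w k) then 1 else 0) := by
        rw [sum_comm]; simp only [mul_sum]
    _ ≤ ∑ w : α → ι, ∏ k, p (w k) :=
        sum_le_sum fun w _ => mul_le_of_le_one_right (prod_nonneg fun k _ => hp.1 (w k))
          (sum_ite_forall_ne_lt_le_one (h ∘ w))
    _ = 1 := sum_prod_eq_one hp.2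

lemma sum_sum_mul_prod_mul_ite_forall_lt_le (K : ℕ) {p : ι → ℝ} (hp : p ∈ stdSimplex ℝ ι)
    (h : ι → β) :
    ∑ τ, ∑ w : Fin K → ι, p τ * (∏ j, p (w j)) * (if ∀ j, h τ < h (w j) then 1 else 0) ≤
      1 / (K + 1) := by
  have key := card_mul_sum_prod_mul_ite_forall_ne_lt_le_one hp h (0 : Fin (K + 1))
  rw [Fintype.card_fin, Nat.cast_succ, ← le_div_iff₀' (by positivity)] at key
  rw [← Fintype.sum_prod_type']
  refine le_of_eq_of_le (Fintype.sum_equiv (Fin.consEquiv fun _ => ι) _ _ fun x => ?_) key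
  simp [Fin.prod_univ_succ, Fin.forall_fin_succ, Fin.succ_ne_zero]

end Exchangeability

section StrictlyBelow

variable {β : Type*} [LinearOrder β] {n : ℕ}

noncomputable def strictlyBelowFraction (S : Finset (Fin n → β)) (τ : Fin n → β) : ℝ :=
  (1 / (n : ℝ)) * ∑ i, if ∀ v ∈ S, τ i < v i then (1 : ℝ) else 0

lemma exists_subset_sum_mul_strictlyBelowFraction_le (T : Finset (Fin n → β)) {K : ℕ}
    (hK : 0 < K) {p : T → ℝ} (hp : p ∈ stdSimplex ℝ T) :
    ∃ S ⊆ T, S.Nonempty ∧ S.card ≤ K ∧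
      ∑ τ, p τ * strictlyBelowFraction S (τ : Fin n → β) ≤ 1 / (K + 1) := by
  classical
  -- `S w` is the set of `K` validators sampled independently from `p`.
  let S : (Fin K → T) → Finset (Fin n → β) := fun w => univ.image fun j => (w j : Fin n → β)
  let P : (Fin K → T) → ℝ := fun w => ∏ j, p (w j)
  have hP0 : ∀ w, 0 ≤ P w := fun w => prod_nonneg fun j _ => hp.1 (w j)
  have hP1 : ∑ w, P w = 1 := sum_prod_eq_one hp.2
  have hcoord (i : Fin n) :
      ∑ w, ∑ τ : T, P w * p τ * (if ∀ v ∈ S w, (τ : Fin n → β) i < v i then 1 else 0) ≤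
        1 / (K + 1) := by
    rw [sum_comm]
    refine le_of_eq_of_le (sum_congr rfl fun τ _ => sum_congr rfl fun w _ => ?_)
      (sum_sum_mul_prod_mul_ite_forall_lt_le K hp fun τ : T => (τ : Fin n → β) i)
    simp only [S, P, forall_mem_image, mem_univ, true_implies, mul_comm (∏ j, p (w j))]
  have havg : ∑ w, P w * ∑ τ, p τ * strictlyBelowFraction (S w) (τ : Fin n → β) ≤ 1 / (K + 1) :=
    calc ∑ w, P w * ∑ τ, p τ * strictlyBelowFraction (S w) (τ : Fin n → β)
        = (1 / (n : ℝ)) * ∑ i, ∑ w, ∑ τ : T,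
            P w * p τ * (if ∀ v ∈ S w, (τ : Fin n → β) i < v i then 1 else 0) := by
          simp only [strictlyBelowFraction, mul_sum, sum_comm_cycle (u := univ (α := Fin n))]
          exact sum_congr rfl fun i _ => sum_congr rfl fun w _ => sum_congr rfl fun τ _ => by ring
      _ ≤ (1 / (n : ℝ)) * ∑ _i : Fin n, 1 / ((K : ℝ) + 1) := by
          gcongr with i; exact hcoord i
      _ ≤ 1 / (K + 1) := by
          rw [sum_const, card_univ, Fintype.card_fin, nsmul_eq_mul, ← mul_assoc, one_div]
          exact mul_le_of_le_one_left (by positivity) inv_mul_le_one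
  obtain ⟨w, -, hw⟩ := (concaveOn_id convex_univ).exists_le_of_centerMass (t := univ)
    (p := fun w => ∑ τ, p τ * strictlyBelowFraction (S w) (τ : Fin n → β))
    (fun w _ => hP0 w) (by rw [hP1]; exact one_pos) fun w _ => Set.mem_univ _
  refine ⟨S w, ?_, ?_, ?_, ?_⟩
  · intro v hv
    obtain ⟨j, -, rfl⟩ := mem_image.mp hv
    exact (w j).2
  · exact ⟨_, mem_image_of_mem _ (mem_univ ⟨0, hK⟩)⟩
  · exact card_image_le.trans (by simp)
  · rw [centerMass_eq_of_sum_1 _ _ hP1] at hw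
    exact hw.trans havg

end StrictlyBelow

lemma PMF.exists_toReal_eq_of_mem_stdSimplex {κ : Type*} [Fintype κ] {q : κ → ℝ}
    (hq : q ∈ stdSimplex ℝ κ) : ∃ μ : PMF κ, ∀ s, (μ s).toReal = q s := by
  have hsum : ∑ s, ENNReal.ofReal (q s) = 1 := by
    rw [← ENNReal.ofReal_sum_of_nonneg fun s _ => hq.1 s, hq.2, ENNReal.ofReal_one]
  exact ⟨PMF.ofFintype _ hsum, fun s => ENNReal.toReal_ofReal (hq.1 s)⟩

theorem stmt1_general (M n : ℕ)
    (T : Finset (Fin n → Fin M)) (hT : T.Nonempty)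
    (ε : ℝ) (hε : ε ∈ Set.Ioo (0 : ℝ) 1) :
    ∃ q : PMF {S : Finset (Fin n → Fin M) //
        ↑S ⊆ (T : Set (Fin n → Fin M)) ∧ S.Nonempty ∧ S.card ≤ ⌈1 / ε⌉₊},
      ∀ τ ∈ T,
        (∑' S, (q S).toReal *
          ((1 / (n : ℝ)) * ∑ i, (if ∀ v ∈ S.1, τ i < v i then (1 : ℝ) else 0))) < ε := by
  classical
  set K := ⌈1 / ε⌉₊
  have hK : 0 < K := Nat.ceil_pos.mpr (one_div_pos.mpr hε.1)
  have hKε : 1 / ((K : ℝ) + 1) < ε := by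
    rw [div_lt_iff₀ (by positivity), ← div_lt_iff₀' hε.1]
    exact (Nat.le_ceil _).trans_lt (lt_add_one _)
  have : Nonempty T := hT.to_subtype
  let κ := {S : Finset (Fin n → Fin M) //
    ↑S ⊆ (T : Set (Fin n → Fin M)) ∧ S.Nonempty ∧ S.card ≤ K}
  obtain ⟨q, hq, hqle⟩ := Matrix.exists_mem_stdSimplex_forall_mulVec_le
    (Matrix.of fun (τ : T) (S : κ) => strictlyBelowFraction S.1 (τ : Fin n → Fin M))
    (1 / ((K : ℝ) + 1)) fun p hp => by
    obtain ⟨S, hST, hS, hSK, hle⟩ := exists_subset_sum_mul_strictlyBelowFraction_le T hK hp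
    exact ⟨⟨S, coe_subset.mpr hST, hS, hSK⟩, hle⟩
  obtain ⟨μ, hμ⟩ := PMF.exists_toReal_eq_of_mem_stdSimplex hq
  refine ⟨μ, fun τ hτ => lt_of_le_of_lt ?_ hKε⟩
  rw [tsum_fintype]
  refine le_of_eq_of_le (sum_congr rfl fun S _ => ?_) (hqle ⟨τ, hτ⟩)
  rw [hμ, mul_comm]
  simp only [Matrix.of_apply, strictlyBelowFraction]
  -- the two sides decide `∀ v ∈ S` through different (but equal) `Decidable` instances
  congr!

/-- Existence of a sparse valid validator distribution (Lemma: generalized sparse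
selective policies). For a finite nonempty set `T` of vectors in `[M]^n` and
`ε ∈ (0,1)`, with `K = ⌈1/ε⌉`, there is a distribution over nonempty subsets
`S ⊆ T` of size at most `K` such that for every `τ ∈ T` the expected fraction of
coordinates where `min_{v ∈ S} v_i > τ_i` is less than `ε`. -/
theorem stmt1 (M n : ℕ) (hM : 0 < M) (hn : 0 < n)
    (T : Finset (Fin n → Fin M)) (hT : T.Nonempty)
    (ε : ℝ) (hε : ε ∈ Set.Ioo (0 : ℝ) 1) :
    ∃ q : PMF {S : Finset (Fin n → Fin M) //
        ↑S ⊆ (T : Set (Fin n → Fin M)) ∧ S.Nonempty ∧ S.card ≤ ⌈1 / ε⌉₊},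
      ∀ τ ∈ T,
        (∑' S, (q S).toReal *
          ((1 / (n : ℝ)) * ∑ i, (if ∀ v ∈ S.1, τ i < v i then (1 : ℝ) else 0))) < ε :=
  stmt1_general M n T hT ε hε
end

section
/- Let p and q be probability distributions on a countable set. Define the geometric mixture p̄ by p̄(a) = √(p(a)q(a)) / Z where Z = Σ_a √(p(a)q(a)) (assume Z > 0). Let D_H²(p,q) = 1 − Σ_a √(p(a)q(a)) denote the squared Hellinger distance. Then D_H²(p̄, q) ≤ (3/2) · D_H²(p, q). -/
/-!
Write `Z = ∑ √(p q)` for the Bhattacharyya coefficient of `p` and `q`, and `p̄ = √(p q) / Z`.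
Pointwise, `(√(p̄ q))² · (Z p) = √(p q)³`, so weighted AM–GM gives
`√(p q) ≤ (2/3) √(p̄ q) + (1/3) Z p`; summing (this is Hölder with exponents `3/2` and `3`)
yields `Z ≤ (2/3) ∑ √(p̄ q) + Z / 3`, i.e. `∑ √(p̄ q) ≥ Z`. Hence
`D_H²(p̄, q) ≤ D_H²(p, q)`, which is at most `(3/2) D_H²(p, q)` because `Z ≤ 1`.
-/

open Real

lemma sqrt_mul_le_add_div_two {x y : ℝ} (hx : 0 ≤ x) (hy : 0 ≤ y) : √(x * y) ≤ (x + y) / 2 :=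
  sqrt_le_iff.mpr ⟨by positivity, by nlinarith [sq_nonneg (x - y)]⟩

/-- Weighted AM–GM `∛(s² b) ≤ (2 s + b) / 3`, stated without cube roots. -/
lemma le_two_thirds_mul_add_one_third_mul_of_sq_mul_eq_pow_three {g s b : ℝ}
    (hg : 0 ≤ g) (hs : 0 ≤ s) (hb : 0 ≤ b) (h : s ^ 2 * b = g ^ 3) :
    g ≤ 2 / 3 * s + 1 / 3 * b := by
  rw [← pow_le_pow_iff_left₀ hg (by positivity) three_ne_zero, ← h]
  -- `(2 s + b)³ - 27 s² b = (s - b)² (8 s + b)`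
  nlinarith [mul_nonneg (sq_nonneg (s - b)) (by positivity : 0 ≤ 8 * s + b)]

section

variable {α : Type*}

noncomputable def bhattacharyya (p q : α → ℝ) : ℝ := ∑' a, √(p a * q a)

noncomputable def geomMixture (p q : α → ℝ) (a : α) : ℝ := √(p a * q a) / bhattacharyya p q

variable {p q : α → ℝ}

lemma summable_sqrt_mul (hp0 : ∀ a, 0 ≤ p a) (hq0 : ∀ a, 0 ≤ q a)
    (hp : Summable p) (hq : Summable q) : Summable fun a ↦ √(p a * q a) :=
  .of_nonneg_of_le (fun _ ↦ sqrt_nonneg _) (fun a ↦ sqrt_mul_le_add_div_two (hp0 a) (hq0 a))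
    ((hp.add hq).div_const 2)

lemma bhattacharyya_le_one (hp0 : ∀ a, 0 ≤ p a) (hq0 : ∀ a, 0 ≤ q a)
    (hp1 : HasSum p 1) (hq1 : HasSum q 1) : bhattacharyya p q ≤ 1 := by
  have hmean : HasSum (fun a ↦ (p a + q a) / 2) 1 := by
    simpa using (hp1.add hq1).div_const 2
  calc bhattacharyya p q ≤ ∑' a, (p a + q a) / 2 :=
        (summable_sqrt_mul hp0 hq0 hp1.summable hq1.summable).tsum_le_tsum
          (fun a ↦ sqrt_mul_le_add_div_two (hp0 a) (hq0 a)) hmean.summable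
    _ = 1 := hmean.tsum_eq

lemma bhattacharyya_le_bhattacharyya_geomMixture (hp0 : ∀ a, 0 ≤ p a) (hq0 : ∀ a, 0 ≤ q a)
    (hp1 : HasSum p 1) (hq : Summable q) (hZ : 0 < bhattacharyya p q) :
    bhattacharyya p q ≤ bhattacharyya (geomMixture p q) q := by
  set Z := bhattacharyya p q
  set g : α → ℝ := fun a ↦ √(p a * q a)
  set s : α → ℝ := fun a ↦ √(geomMixture p q a * q a)
  have hg0 (a : α) : 0 ≤ g a := sqrt_nonneg _
  have hmix0 (a : α) : 0 ≤ geomMixture p q a := div_nonneg (hg0 a) hZ.le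
  have hg : Summable g := summable_sqrt_mul hp0 hq0 hp1.summable hq
  have hs : Summable s := summable_sqrt_mul hmix0 hq0 (hg.div_const Z) hq
  have hpointwise (a : α) : g a ≤ 2 / 3 * s a + 1 / 3 * (Z * p a) := by
    refine le_two_thirds_mul_add_one_third_mul_of_sq_mul_eq_pow_three (hg0 a) (sqrt_nonneg _)
      (mul_nonneg hZ.le (hp0 a)) ?_
    have hgsq : g a ^ 2 = p a * q a := sq_sqrt (mul_nonneg (hp0 a) (hq0 a))
    rw [sq_sqrt (mul_nonneg (hmix0 a) (hq0 a))]
    change g a / Z * q a * (Z * p a) = g a ^ 3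
    field_simp
    linear_combination -g a * hgsq
  have hsum : Z ≤ 2 / 3 * bhattacharyya (geomMixture p q) q + 1 / 3 * Z :=
    calc Z = ∑' a, g a := rfl
      _ ≤ ∑' a, (2 / 3 * s a + 1 / 3 * (Z * p a)) :=
        hg.tsum_le_tsum hpointwise ((hs.mul_left _).add ((hp1.summable.mul_left Z).mul_left _))
      _ = 2 / 3 * bhattacharyya (geomMixture p q) q + 1 / 3 * Z := by
        rw [(hs.mul_left _).tsum_add ((hp1.summable.mul_left Z).mul_left _), tsum_mul_left,
          tsum_mul_left, tsum_mul_left, hp1.tsum_eq, mul_one]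
        rfl
  linarith

end

theorem stmt3_general {α : Type*} (p q : α → ℝ)
    (hp0 : ∀ a, 0 ≤ p a) (hq0 : ∀ a, 0 ≤ q a)
    (hp1 : HasSum p 1) (hq1 : HasSum q 1)
    (Z : ℝ) (hZ : Z = ∑' a, Real.sqrt (p a * q a)) (hZpos : 0 < Z) :
    1 - ∑' a, Real.sqrt ((Real.sqrt (p a * q a) / Z) * q a)
      ≤ (3 / 2) * (1 - ∑' a, Real.sqrt (p a * q a)) := by
  subst hZ
  have hmix := bhattacharyya_le_bhattacharyya_geomMixture hp0 hq0 hp1 hq1.summable hZpos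
  have hone := bhattacharyya_le_one hp0 hq0 hp1 hq1
  change 1 - bhattacharyya (geomMixture p q) q ≤ 3 / 2 * (1 - bhattacharyya p q)
  linarith

/-- Geometric mixture Hellinger bound: if `p̄(a) = √(p(a)q(a)) / Z` with
`Z = Σ_a √(p(a)q(a)) > 0`, then `D_H²(p̄, q) ≤ (3/2)·D_H²(p, q)`, where
`D_H²(f,g) = 1 - Σ_a √(f(a)g(a))`. -/
theorem stmt3 {α : Type*} [Countable α] (p q : α → ℝ)
    (hp0 : ∀ a, 0 ≤ p a) (hq0 : ∀ a, 0 ≤ q a)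
    (hp1 : HasSum p 1) (hq1 : HasSum q 1)
    (Z : ℝ) (hZ : Z = ∑' a, Real.sqrt (p a * q a)) (hZpos : 0 < Z) :
    1 - ∑' a, Real.sqrt ((Real.sqrt (p a * q a) / Z) * q a)
      ≤ (3 / 2) * (1 - ∑' a, Real.sqrt (p a * q a)) :=
  stmt3_general p q hp0 hq0 hp1 hq1 Z hZ hZpos
end
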